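/- arXiv:1202.4875 — 2 statements merged into one kernel-verified Lean document; each statement's English description precedes it below -/
import Mathlib

section
/- If f ∈ L^2 is ℱ_0-measurable and satisfies ∑_{n≥1} ‖E_0(f∘θ^n)‖_2 / √n < ∞, then f satisfies the Hannan condition ∑_{i≥0} ‖P_0(f∘θ^i)‖_2 < ∞. -/
/-! By stationarity, `P_0(f∘θ^(n+j))` has the same norm as the martingale difference
`E_{-j}(f∘θ^n) - E_{-j-1}(f∘θ^n)`. For `j < n` these are orthogonal pieces of `E_0(f∘θ^n)`, so
`∑_{j<n} ‖P_0(f∘θ^(n+j))‖₂² ≤ ‖E_0(f∘θ^n)‖₂²`, and Cauchy–Schwarz bounds the dyadic block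
`∑_{2^m ≤ i < 2^(m+1)} ‖P_0(f∘θ^i)‖₂` by `2^(m/2) ‖E_0(f∘θ^(2^m))‖₂`. As `‖E_0(f∘θ^n)‖₂` is
nonincreasing in `n`, the Cauchy condensation test turns the summability of these block bounds into
the hypothesis `∑ ‖E_0(f∘θ^n)‖₂ / √n < ∞`. -/

open MeasureTheory Filter ENNReal Finset

theorem summable_of_sum_dyadic_block_le {a c : ℕ → ℝ} (ha : ∀ n, 0 ≤ a n) (hc : Summable c)
    (h : ∀ m, ∑ k ∈ Ico (2 ^ m) (2 ^ (m + 1)), a k ≤ c m) : Summable a := by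
  have hc0 : ∀ m, 0 ≤ c m := fun m => (sum_nonneg fun k _ => ha k).trans (h m)
  have hdyadic : ∀ M, ∑ k ∈ range (2 ^ M), a k ≤ a 0 + ∑ m ∈ range M, c m := by
    intro M
    induction M with
    | zero => simp
    | succ M ih =>
      rw [← sum_range_add_sum_Ico _ (Nat.pow_le_pow_right two_pos M.le_succ), sum_range_succ]
      linarith [h M]
  refine summable_of_sum_range_le ha (c := a 0 + ∑' m, c m) fun N => ?_
  calc ∑ k ∈ range N, a k ≤ ∑ k ∈ range (2 ^ N), a k :=
        sum_le_sum_of_subset_of_nonneg (range_mono N.lt_two_pow_self.le) fun k _ _ => ha k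
    _ ≤ a 0 + ∑ m ∈ range N, c m := hdyadic N
    _ ≤ a 0 + ∑' m, c m := add_le_add_right (hc.sum_le_tsum _ fun m _ => hc0 m) _

theorem sum_le_sqrt_card_mul_of_sum_sq_le {ι : Type*} (s : Finset ι) (f : ι → ℝ) {c : ℝ}
    (hc : 0 ≤ c) (h : ∑ i ∈ s, f i ^ 2 ≤ c ^ 2) : ∑ i ∈ s, f i ≤ Real.sqrt #s * c := by
  rw [← Real.sqrt_sq hc, ← Real.sqrt_mul (Nat.cast_nonneg _)]
  exact Real.le_sqrt_of_sq_le
    (sq_sum_le_card_mul_sum_sq.trans (mul_le_mul_of_nonneg_left h (Nat.cast_nonneg _)))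

theorem summable_of_sum_sq_shift_le {a b : ℕ → ℝ} (ha : ∀ n, 0 ≤ a n) (hb : ∀ n, 0 ≤ b n)
    (hb_anti : Antitone b) (hab : ∀ n, ∑ j ∈ range n, a (n + j) ^ 2 ≤ b n ^ 2)
    (hsum : Summable fun n : ℕ => b (n + 1) / Real.sqrt ((n : ℝ) + 1)) : Summable a := by
  have hcond : Summable fun m : ℕ => (2 : ℝ) ^ m * (b (2 ^ m) / Real.sqrt ((2 ^ m : ℕ) : ℝ)) := by
    refine (summable_condensed_iff_of_nonneg (f := fun n => b n / Real.sqrt n)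
      (fun n => div_nonneg (hb n) (Real.sqrt_nonneg _)) fun m n hm hmn => ?_).2 ?_
    · exact div_le_div₀ (hb m) (hb_anti hmn) (Real.sqrt_pos.2 (Nat.cast_pos.2 hm))
        (Real.sqrt_le_sqrt (Nat.cast_le.2 hmn))
    · exact (summable_nat_add_iff 1).1 (by simpa using hsum)
  refine summable_of_sum_dyadic_block_le ha hcond fun m => ?_
  have hlen : 2 ^ (m + 1) - 2 ^ m = 2 ^ m := by rw [pow_succ]; omega
  rw [sum_Ico_eq_sum_range, hlen]
  calc ∑ j ∈ range (2 ^ m), a (2 ^ m + j) ≤ Real.sqrt ((2 ^ m : ℕ) : ℝ) * b (2 ^ m) := by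
        simpa using sum_le_sqrt_card_mul_of_sum_sq_le (range (2 ^ m)) (fun j => a (2 ^ m + j))
          (hb _) (hab _)
    _ = (2 : ℝ) ^ m * (b (2 ^ m) / Real.sqrt ((2 ^ m : ℕ) : ℝ)) := by
        field_simp
        rw [Real.sq_sqrt (by positivity)]
        push_cast; ring

section ConditionalExpectation

variable {X E : Type*} {m : MeasurableSpace X} [m0 : MeasurableSpace X] {μ : Measure X}
  [NormedAddCommGroup E] [InnerProductSpace ℝ E] [CompleteSpace E]

theorem sq_eLpNorm_eq_sq_eLpNorm_sub_condExp_add [IsFiniteMeasure μ] (hm : m ≤ m0) {h : X → E}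
    (hh : MemLp h 2 μ) :
    (eLpNorm h 2 μ).toReal ^ 2 =
      (eLpNorm (h - μ[h|m]) 2 μ).toReal ^ 2 + (eLpNorm (μ[h|m]) 2 μ).toReal ^ 2 := by
  set H : Lp E 2 μ := hh.toLp h
  set P : Lp E 2 μ := (condExpL2 E ℝ hm H : Lp E 2 μ)
  have hP : P =ᵐ[μ] μ[h|m] := hh.condExpL2_ae_eq_condExp hm
  have horth : inner ℝ (H - P) P = 0 := by
    rw [inner_sub_left, sub_eq_zero, eq_comm]
    exact inner_condExpL2_eq_inner_fun hm H P (aestronglyMeasurable_condExpL2 hm H)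
  have hHP : (⇑(H - P) : X → E) =ᵐ[μ] h - μ[h|m] :=
    (Lp.coeFn_sub H P).trans (hh.coeFn_toLp.sub hP)
  have hpyth := norm_add_sq_eq_norm_sq_add_norm_sq_real horth
  rw [sub_add_cancel] at hpyth
  rw [← Lp.norm_toLp h hh, ← eLpNorm_congr_ae hHP, ← eLpNorm_congr_ae hP, ← Lp.norm_def,
    ← Lp.norm_def]
  simpa only [sq] using hpyth

theorem sum_sq_eLpNorm_condExp_sub_add_sq_eLpNorm [IsFiniteMeasure μ]
    {G : ℕ → MeasurableSpace X} (hG : Antitone G) (hGle : ∀ j, G j ≤ m0) {g : X → E}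
    (hg : MemLp g 2 μ) (n : ℕ) :
    ∑ j ∈ range n, (eLpNorm (μ[g|G j] - μ[g|G (j + 1)]) 2 μ).toReal ^ 2
      + (eLpNorm (μ[g|G n]) 2 μ).toReal ^ 2 = (eLpNorm (μ[g|G 0]) 2 μ).toReal ^ 2 := by
  induction n with
  | zero => simp
  | succ n ih =>
    have htower : μ[μ[g|G n]|G (n + 1)] =ᵐ[μ] μ[g|G (n + 1)] :=
      condExp_condExp_of_le (hG n.le_succ) (hGle n)
    have hstep := sq_eLpNorm_eq_sq_eLpNorm_sub_condExp_add (hGle (n + 1))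
      (hg.condExp (m := G n) one_le_two)
    rw [eLpNorm_congr_ae htower, eLpNorm_congr_ae ((EventuallyEq.refl _ _).sub htower)] at hstep
    rw [sum_range_succ, add_assoc, ← hstep, ih]

theorem condExp_comp_ae_eq {Y : Type*} {mY : MeasurableSpace Y} [mY0 : MeasurableSpace Y]
    {ν : Measure Y} [IsFiniteMeasure μ] [IsFiniteMeasure ν] (hmY : mY ≤ mY0) {φ : X → Y}
    (hφ : MeasurePreserving φ μ ν) {g : Y → E} (hg : Integrable g ν) :
    μ[g ∘ φ|mY.comap φ] =ᵐ[μ] ν[g|mY] ∘ φ := by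
  have hcomap : mY.comap φ ≤ m0 := (MeasurableSpace.comap_mono hmY).trans hφ.measurable.comap_le
  refine (ae_eq_condExp_of_forall_setIntegral_eq hcomap (hφ.integrable_comp_of_integrable hg)
    (fun s _ _ => (hφ.integrable_comp_of_integrable integrable_condExp).integrableOn)
    (fun s hs _ => ?_) ?_).symm
  · obtain ⟨t, ht, rfl⟩ := hs
    have hpull : ∀ u : Y → E, Integrable u ν → ∫ x in φ ⁻¹' t, u (φ x) ∂μ = ∫ y in t, u y ∂ν :=
      fun u hu => by
        rw [← setIntegral_map (hmY t ht) (hφ.map_eq ▸ hu.aestronglyMeasurable)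
          hφ.measurable.aemeasurable, hφ.map_eq]
    exact (hpull _ integrable_condExp).trans ((setIntegral_condExp hmY hg ht).trans (hpull g hg).symm)
  · exact (stronglyMeasurable_condExp.comp_measurable (comap_measurable φ)).aestronglyMeasurable

theorem eLpNorm_condExp_comp_le_of_le_comap [IsFiniteMeasure μ] (hm : m ≤ m0) {θ : X → X}
    (hθ : MeasurePreserving θ μ μ) (hmθ : m ≤ m.comap θ) {g : X → E} (hg : Integrable g μ)
    {p : ℝ≥0∞} (hp : 1 ≤ p) :
    eLpNorm (μ[g ∘ θ|m]) p μ ≤ eLpNorm (μ[g|m]) p μ :=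
  calc eLpNorm (μ[g ∘ θ|m]) p μ = eLpNorm (μ[μ[g ∘ θ|m.comap θ]|m]) p μ :=
        eLpNorm_congr_ae (condExp_condExp_of_le hmθ
          ((MeasurableSpace.comap_mono hm).trans hθ.measurable.comap_le)).symm
    _ ≤ eLpNorm (μ[g ∘ θ|m.comap θ]) p μ := eLpNorm_condExp_le_eLpNorm _ hp
    _ = eLpNorm (μ[g|m] ∘ θ) p μ := eLpNorm_congr_ae (condExp_comp_ae_eq hm hθ hg)
    _ = eLpNorm (μ[g|m]) p μ :=
        eLpNorm_comp_measurePreserving integrable_condExp.aestronglyMeasurable hθ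

end ConditionalExpectation

section StationaryFiltration

variable {X : Type*} {θ : X → X} {F : ℤ → MeasurableSpace X}

theorem comap_iterate_eq_of_succ_eq_comap (hFθ : ∀ n, F (n + 1) = (F n).comap θ) (k : ℤ)
    (j : ℕ) : F (k + j) = (F k).comap θ^[j] := by
  induction j with
  | zero => simp [MeasurableSpace.comap_id]
  | succ j ih =>
    rw [Nat.cast_succ, ← add_assoc, hFθ, ih, MeasurableSpace.comap_comp, Function.iterate_succ]

variable {E : Type*} [m0 : MeasurableSpace X] {μ : Measure X}
  [NormedAddCommGroup E] [InnerProductSpace ℝ E] [CompleteSpace E]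

theorem condExp_comp_iterate_ae_eq [IsFiniteMeasure μ] (hθ : MeasurePreserving θ μ μ)
    (hFle : ∀ n, F n ≤ m0) (hFθ : ∀ n, F (n + 1) = (F n).comap θ) {g : X → E}
    (hg : Integrable g μ) (k : ℤ) (j : ℕ) :
    μ[g ∘ θ^[j]|F (k + j)] =ᵐ[μ] μ[g|F k] ∘ θ^[j] := by
  rw [comap_iterate_eq_of_succ_eq_comap hFθ k j]
  exact condExp_comp_ae_eq (hFle k) (hθ.iterate j) hg

theorem eLpNorm_condExp_sub_comp_iterate [IsFiniteMeasure μ] (hθ : MeasurePreserving θ μ μ)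
    (hFle : ∀ n, F n ≤ m0) (hFθ : ∀ n, F (n + 1) = (F n).comap θ) {g : X → E}
    (hg : Integrable g μ) (j : ℕ) (p : ℝ≥0∞) :
    eLpNorm (μ[g ∘ θ^[j]|F 0] - μ[g ∘ θ^[j]|F (-1)]) p μ
      = eLpNorm (μ[g|F (-j)] - μ[g|F (-(j + 1 : ℕ))]) p μ := by
  have h0 := condExp_comp_iterate_ae_eq hθ hFle hFθ hg (-j) j
  have h1 := condExp_comp_iterate_ae_eq hθ hFle hFθ hg (-(j + 1 : ℕ)) j
  rw [neg_add_cancel] at h0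
  rw [show -((j + 1 : ℕ) : ℤ) + j = -1 by push_cast; ring] at h1
  rw [eLpNorm_congr_ae (h0.sub h1)]
  exact eLpNorm_comp_measurePreserving
    (integrable_condExp.aestronglyMeasurable.sub integrable_condExp.aestronglyMeasurable)
    (hθ.iterate j)

end StationaryFiltration

theorem mw_implies_hannan_general
    {X : Type*} [m0 : MeasurableSpace X] (μ : Measure X) [IsProbabilityMeasure μ]
    (θ : X → X) (hθ : MeasurePreserving θ μ μ)
    (F : ℤ → MeasurableSpace X) (hFle : ∀ n, F n ≤ m0) (hFmono : Monotone F)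
    (hFθ : ∀ n : ℤ, F (n + 1) = (F n).comap θ)
    (f : X → ℝ) (hf : MemLp f 2 μ)
    (hMW : Summable (fun n : ℕ =>
      (eLpNorm (μ[fun z => f (θ^[n + 1] z)|F 0]) 2 μ).toReal / Real.sqrt ((n : ℝ) + 1))) :
    Summable (fun i : ℕ =>
      (eLpNorm (μ[fun z => f (θ^[i] z)|F 0] - μ[fun z => f (θ^[i] z)|F (-1)]) 2 μ).toReal) := by
  have hfθ : ∀ n, MemLp (f ∘ θ^[n]) 2 μ := fun n => hf.comp_measurePreserving (hθ.iterate n)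
  have hF0 : F 0 ≤ (F 0).comap θ := by rw [← hFθ]; exact hFmono (by norm_num)
  have hG : Antitone fun j : ℕ => F (-j) := fun i j hij => hFmono (by omega)
  refine summable_of_sum_sq_shift_le (b := fun n => (eLpNorm (μ[f ∘ θ^[n]|F 0]) 2 μ).toReal)
    (fun _ => toReal_nonneg) (fun _ => toReal_nonneg) (antitone_nat_of_succ_le fun n => ?_)
    (fun n => ?_) hMW
  · refine toReal_mono ((hfθ n).condExp one_le_two).eLpNorm_ne_top ?_
    rw [Function.iterate_succ, ← Function.comp_assoc]
    exact eLpNorm_condExp_comp_le_of_le_comap (hFle 0) hθ hF0 ((hfθ n).integrable one_le_two)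
      one_le_two
  · have htele := sum_sq_eLpNorm_condExp_sub_add_sq_eLpNorm hG (fun j => hFle _) (hfθ n) n
    simp only [Nat.cast_zero, neg_zero] at htele
    calc ∑ j ∈ range n, (eLpNorm (μ[f ∘ θ^[n + j]|F 0] - μ[f ∘ θ^[n + j]|F (-1)]) 2 μ).toReal ^ 2
        = ∑ j ∈ range n,
            (eLpNorm (μ[f ∘ θ^[n]|F (-j)] - μ[f ∘ θ^[n]|F (-(j + 1 : ℕ))]) 2 μ).toReal ^ 2 := by
          simp_rw [Function.iterate_add, ← Function.comp_assoc, eLpNorm_condExp_sub_comp_iterate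
            hθ hFle hFθ ((hfθ n).integrable one_le_two)]
      _ ≤ (eLpNorm (μ[f ∘ θ^[n]|F 0]) 2 μ).toReal ^ 2 :=
          htele ▸ le_add_of_nonneg_right (sq_nonneg _)

/-- The condition `∑_{n≥1} ‖E_0(f∘θ^n)‖₂/√n < ∞` implies the Hannan condition
`∑_{i≥0} ‖P_0(f∘θ^i)‖₂ < ∞`. -/
theorem mw_implies_hannan
    {X : Type*} [m0 : MeasurableSpace X] (μ : Measure X) [IsProbabilityMeasure μ]
    (θ θi : X → X) (hθ : MeasurePreserving θ μ μ) (hθi : MeasurePreserving θi μ μ)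
    (hinv1 : Function.LeftInverse θi θ) (hinv2 : Function.RightInverse θi θ)
    (F : ℤ → MeasurableSpace X) (hFle : ∀ n, F n ≤ m0) (hFmono : Monotone F)
    (hFθ : ∀ n : ℤ, F (n + 1) = (F n).comap θ)
    (f : X → ℝ) (hf : MemLp f 2 μ) (hfmeas : StronglyMeasurable[F 0] f)
    (hMW : Summable (fun n : ℕ =>
      (eLpNorm (μ[fun z => f (θ^[n + 1] z)|F 0]) 2 μ).toReal / Real.sqrt ((n : ℝ) + 1))) :
    Summable (fun i : ℕ =>
      (eLpNorm (μ[fun z => f (θ^[i] z)|F 0] - μ[fun z => f (θ^[i] z)|F (-1)]) 2 μ).toReal) :=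
  mw_implies_hannan_general (m0 := m0) μ θ hθ F hFle hFmono hFθ f hf hMW
end

section
/- Let (X,𝒜) be a Polish space with its Borel σ-algebra, μ a probability on 𝒜, θ an invertible bimeasurable μ-preserving transformation, and ℱ ⊂ 𝒜 a σ-algebra with ℱ ⊂ θ^{-1}ℱ. Define W_n(x) = θ^n(x) for n ∈ ℤ. Then (W_n)_{n∈ℤ}, viewed as taking values in (X,ℱ), is a stationary homogeneous Markov chain with transition operator Qh = E(h∘θ|ℱ) and stationary distribution μ; in particular, for every ℱ-measurable f ∈ L^2, the stationary process (f∘θ^n)_n is a functional of a stationary Markov chain. -/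
open MeasureTheory

/-!
Write `G(y) = ∏_{k ≤ m} φ_k(θ⁻¹^{m-k} y)`, so that `∏_{k ≤ m} φ_k(θ^k x) = G(θ^m x)`. Since
`ℱ ⊆ θ⁻¹ℱ`, the inverse `θ⁻¹` is `ℱ`-measurable, hence so is `G`. By invariance of `μ` under
`θ^m`, both sides of the Markov identity become `∫ G · (φ_{m+1} ∘ θ)` and
`∫ G · E(φ_{m+1} ∘ θ | ℱ)`, which agree because `G` can be pulled out of the conditional
expectation.
-/

theorem measurable_of_rightInverse_of_le_comap {α β : Type*} {mα : MeasurableSpace α}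
    {mβ : MeasurableSpace β} {f : α → β} {g : β → α} (hfg : Function.RightInverse g f)
    (h : mα ≤ mβ.comap f) : Measurable[mβ, mα] g := by
  intro s hs
  obtain ⟨t, ht, rfl⟩ := h s hs
  rwa [← Set.preimage_comp, hfg.comp_eq_id, Set.preimage_id]

theorem Function.LeftInverse.iterate_sub_apply_iterate {α : Type*} {f g : α → α}
    (h : Function.LeftInverse g f) {k m : ℕ} (hkm : k ≤ m) (x : α) :
    g^[m - k] (f^[m] x) = f^[k] x := by
  rw [← Nat.sub_add_cancel hkm, Function.iterate_add_apply, Nat.add_sub_cancel,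
    (h.iterate (m - k)) (f^[k] x)]

theorem Finset.exists_abs_prod_le {ι α : Type*} (s : Finset ι) {f : ι → α → ℝ}
    (hf : ∀ i, ∃ B, ∀ x, |f i x| ≤ B) : ∃ B, ∀ x, |∏ i ∈ s, f i x| ≤ B := by
  choose B hB using hf
  refine ⟨∏ i ∈ s, |B i|, fun x => ?_⟩
  rw [Finset.abs_prod]
  exact Finset.prod_le_prod (fun i _ => abs_nonneg _) fun i _ => (hB i x).trans (le_abs_self _)

namespace MeasureTheory

theorem MeasurePreserving.integral_comp_of_aestronglyMeasurable {α β E : Type*}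
    {_ : MeasurableSpace α} {_ : MeasurableSpace β} [NormedAddCommGroup E] [NormedSpace ℝ E]
    {μ : Measure α} {ν : Measure β} {f : α → β} (hf : MeasurePreserving f μ ν) {g : β → E}
    (hg : AEStronglyMeasurable g ν) : ∫ x, g (f x) ∂μ = ∫ y, g y ∂ν := by
  rw [← integral_map hf.measurable.aemeasurable (hf.map_eq ▸ hg), hf.map_eq]

theorem integral_mul_condExp_of_stronglyMeasurable_left {Ω : Type*} {m m₀ : MeasurableSpace Ω}
    {μ : Measure Ω} (hm : m ≤ m₀) [SigmaFinite (μ.trim hm)] {f g : Ω → ℝ}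
    (hf : StronglyMeasurable[m] f) (hfg : Integrable (f * g) μ) (hg : Integrable g μ) :
    ∫ x, f x * (μ[g|m]) x ∂μ = ∫ x, f x * g x ∂μ := by
  calc ∫ x, f x * (μ[g|m]) x ∂μ = ∫ x, (μ[f * g|m]) x ∂μ :=
        integral_congr_ae (condExp_mul_of_stronglyMeasurable_left hf hfg hg).symm
    _ = ∫ x, f x * g x ∂μ := integral_condExp hm

end MeasureTheory

theorem integral_prod_iterate_eq_integral_mul_condExp {X : Type*} {F m0 : MeasurableSpace X}
    {μ : Measure X} [IsFiniteMeasure μ] {θ θi : X → X} (hθ : MeasurePreserving θ μ μ)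
    (hinv1 : Function.LeftInverse θi θ) (hinv2 : Function.RightInverse θi θ) (hFle : F ≤ m0)
    (hFsub : F ≤ F.comap θ) {φ : ℕ → X → ℝ}
    (hφm : ∀ k, StronglyMeasurable[F] (φ k)) (hφb : ∀ k, ∃ B : ℝ, ∀ x, |φ k x| ≤ B) (m : ℕ) :
    ∫ x, ∏ k ∈ Finset.range (m + 2), φ k (θ^[k] x) ∂μ =
      ∫ x, (∏ k ∈ Finset.range (m + 1), φ k (θ^[k] x)) *
        (μ[fun y => φ (m + 1) (θ y)|F]) (θ^[m] x) ∂μ := by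
  set G : X → ℝ := fun y => ∏ k ∈ Finset.range (m + 1), φ k (θi^[m - k] y)
  set f : X → ℝ := fun y => φ (m + 1) (θ y)
  have hprod (x : X) : ∏ k ∈ Finset.range (m + 1), φ k (θ^[k] x) = G (θ^[m] x) :=
    Finset.prod_congr rfl fun k hk => by
      rw [hinv1.iterate_sub_apply_iterate (Nat.lt_succ_iff.mp (Finset.mem_range.mp hk))]
  have hθi : Measurable[F, F] θi := measurable_of_rightInverse_of_le_comap hinv2 hFsub
  have hG : StronglyMeasurable[F] G :=
    Finset.stronglyMeasurable_fun_prod _ fun k _ => (hφm k).comp_measurable (hθi.iterate _)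
  obtain ⟨BG, hBG⟩ := Finset.exists_abs_prod_le (Finset.range (m + 1))
    fun k => (hφb k).imp fun B hB y => hB (θi^[m - k] y)
  obtain ⟨Bf, hBf⟩ := hφb (m + 1)
  have hf : Integrable f μ :=
    .of_bound (((hφm _).mono hFle).comp_measurable hθ.measurable).aestronglyMeasurable Bf
      (ae_of_all _ fun y => hBf (θ y))
  have hGf : Integrable (G * f) μ :=
    hf.bdd_mul (hG.mono hFle).aestronglyMeasurable (ae_of_all _ hBG)
  have hGQf : AEStronglyMeasurable (G * μ[f|F]) μ :=
    ((hG.mono hFle).mul (stronglyMeasurable_condExp.mono hFle)).aestronglyMeasurable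
  have hθm := hθ.iterate m
  calc ∫ x, ∏ k ∈ Finset.range (m + 2), φ k (θ^[k] x) ∂μ
      = ∫ x, (G * f) (θ^[m] x) ∂μ := by
        congr 1 with x
        rw [Finset.prod_range_succ, hprod, Function.iterate_succ_apply']
        rfl
    _ = ∫ y, G y * f y ∂μ := hθm.integral_comp_of_aestronglyMeasurable hGf.aestronglyMeasurable
    _ = ∫ y, (G * μ[f|F]) y ∂μ :=
        (integral_mul_condExp_of_stronglyMeasurable_left hFle hG hGf hf).symm
    _ = _ := by
        rw [← hθm.integral_comp_of_aestronglyMeasurable hGQf]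
        simp only [hprod, Pi.mul_apply, f]

theorem markov_chain_representation_general
    {X : Type*}
    [m0 : MeasurableSpace X]
    (μ : Measure X) [IsProbabilityMeasure μ]
    (θ θi : X → X) (hθ : MeasurePreserving θ μ μ)
    (hinv1 : Function.LeftInverse θi θ) (hinv2 : Function.RightInverse θi θ)
    (F : MeasurableSpace X) (hFle : F ≤ m0) (hFsub : F ≤ F.comap θ) :
    (∀ h : X → ℝ, Integrable h μ →
      ∫ x, (μ[fun y => h (θ y)|F]) x ∂μ = ∫ x, h x ∂μ) ∧
    (∀ n : ℕ, 1 ≤ n → ∀ φ : ℕ → X → ℝ,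
      (∀ k, StronglyMeasurable[F] (φ k)) → (∀ k, ∃ B : ℝ, ∀ x, |φ k x| ≤ B) →
      ∫ x, ∏ k ∈ Finset.range (n + 1), φ k (θ^[k] x) ∂μ =
        ∫ x, (∏ k ∈ Finset.range n, φ k (θ^[k] x)) *
          (μ[fun y => φ n (θ y)|F]) (θ^[n - 1] x) ∂μ) := by
  refine ⟨fun h hh => ?_, fun n hn φ hφm hφb => ?_⟩
  · exact (integral_condExp hFle).trans
      (hθ.integral_comp_of_aestronglyMeasurable hh.aestronglyMeasurable)
  · obtain ⟨m, rfl⟩ := Nat.exists_eq_add_of_le' hn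
    exact integral_prod_iterate_eq_integral_mul_condExp hθ hinv1 hinv2 hFle hFsub hφm hφb m

/-- On a Polish space, `W_n = θ^n` is a stationary homogeneous Markov chain with state
space `(X, ℱ)` and transition operator `Q h = E(h∘θ|ℱ)`: `Q` preserves `μ` and the Markov
property `∫ φ_0(W_0)⋯φ_n(W_n) dμ = ∫ φ_0(W_0)⋯φ_{n-1}(W_{n-1})·(Qφ_n)(W_{n-1}) dμ` holds
for all bounded `ℱ`-measurable `φ_k`. In particular any `ℱ`-measurable `f ∈ L²` yields a
process `(f∘θ^n)` which is a functional of a stationary Markov chain. -/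
theorem markov_chain_representation
    {X : Type*} [TopologicalSpace X] [PolishSpace X]
    [m0 : MeasurableSpace X] [BorelSpace X]
    (μ : Measure X) [IsProbabilityMeasure μ]
    (θ θi : X → X) (hθ : MeasurePreserving θ μ μ) (hθi : MeasurePreserving θi μ μ)
    (hinv1 : Function.LeftInverse θi θ) (hinv2 : Function.RightInverse θi θ)
    (F : MeasurableSpace X) (hFle : F ≤ m0) (hFsub : F ≤ F.comap θ) :
    (∀ h : X → ℝ, Integrable h μ →
      ∫ x, (μ[fun y => h (θ y)|F]) x ∂μ = ∫ x, h x ∂μ) ∧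
    (∀ n : ℕ, 1 ≤ n → ∀ φ : ℕ → X → ℝ,
      (∀ k, StronglyMeasurable[F] (φ k)) → (∀ k, ∃ B : ℝ, ∀ x, |φ k x| ≤ B) →
      ∫ x, ∏ k ∈ Finset.range (n + 1), φ k (θ^[k] x) ∂μ =
        ∫ x, (∏ k ∈ Finset.range n, φ k (θ^[k] x)) *
          (μ[fun y => φ n (θ y)|F]) (θ^[n - 1] x) ∂μ) :=
  markov_chain_representation_general (m0 := m0) μ θ θi hθ hinv1 hinv2 F hFle hFsub
end
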